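/- arXiv:2212.10424 — 2 statements merged into one kernel-verified Lean document; each statement's English description precedes it below -/
import Mathlib

section
/- Let N ≥ 1 and let Q₁₁, Q₁₂, Q₂₂, L₁, L₂ be real N×N diagonal matrices. Suppose the 2N×2N block matrix Q = [[Q₁₁, Q₁₂], [Q₁₂, Q₂₂]] is symmetric positive definite, Q₁₂ is negative definite, and L₁ and L₂ are positive definite. Write Q⁻¹ = [[P₁₁, P₁₂], [P₁₂ᵀ, P₂₂]] in N×N blocks and define K₁ = L₁P₁₁ + L₂P₁₂ᵀ and K₂ = L₁P₁₂ + L₂P₂₂ (so that [K₁ K₂] = [L₁ L₂]·Q⁻¹). Then K₁ and K₂ are diagonal positive definite matrices. -/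
open Matrix

/-!
All four blocks of `Q` are diagonal, so `Q` is, up to a permutation of coordinates, a direct sum
of the `2 × 2` matrices `[[a i, b i], [b i, c i]]`, and `Q⁻¹` has diagonal blocks read off from the
adjugates: `P₁₁ = c / d`, `P₁₂ = -b / d`, `P₂₂ = a / d` with `d = a c - b²`. Positive definiteness
of `Q` gives `a, c, d > 0`, and `b < 0`, so every entry of `K₁ = l₁ c / d - l₂ b / d` and of
`K₂ = -l₁ b / d + l₂ a / d` is a sum of positive terms.
-/

namespace Matrix

variable {n : Type*} [Fintype n] [DecidableEq n]

theorem inv_fromBlocks_diagonal {K : Type*} [Field K] (a b c e : n → K)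
    (hd : ∀ i, a i * e i - b i * c i ≠ 0) :
    (fromBlocks (diagonal a) (diagonal b) (diagonal c) (diagonal e))⁻¹ =
      fromBlocks (diagonal fun i => e i / (a i * e i - b i * c i))
        (diagonal fun i => -b i / (a i * e i - b i * c i))
        (diagonal fun i => -c i / (a i * e i - b i * c i))
        (diagonal fun i => a i / (a i * e i - b i * c i)) := by
  refine inv_eq_right_inv ?_
  rw [fromBlocks_multiply, ← fromBlocks_one, ← diagonal_one, ← diagonal_zero]
  simp only [diagonal_mul_diagonal, diagonal_add]
  congr 1 <;> congr 1 <;> funext i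
  · linear_combination mul_inv_cancel₀ (hd i)
  · ring
  · ring
  · linear_combination mul_inv_cancel₀ (hd i)

variable {a b c : n → ℝ}
  (hQ : (fromBlocks (diagonal a) (diagonal b) (diagonal b) (diagonal c)).PosDef)
include hQ

theorem PosDef.fromBlocks_diagonal_quadratic_pos (i : n) {x y : ℝ} (hxy : x ≠ 0 ∨ y ≠ 0) :
    0 < a i * x * x + 2 * b i * x * y + c i * y * y := by
  have hv : (Sum.elim (Pi.single i x) (Pi.single i y) : n ⊕ n → ℝ) ≠ 0 := by
    intro h
    rcases hxy with hx | hy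
    · exact hx (by simpa using congrFun h (Sum.inl i))
    · exact hy (by simpa using congrFun h (Sum.inr i))
  have := hQ.dotProduct_mulVec_pos hv
  simp only [star_trivial, fromBlocks_mulVec, sumElim_dotProduct_sumElim, mulVec_diagonal,
    single_dotProduct, Pi.add_apply, Sum.elim_comp_inl, Sum.elim_comp_inr,
    Pi.single_eq_same] at this
  linear_combination this

theorem PosDef.fromBlocks_diagonal_fst_pos (i : n) : 0 < a i := by
  simpa using hQ.fromBlocks_diagonal_quadratic_pos i (x := 1) (y := 0) (by simp)

theorem PosDef.fromBlocks_diagonal_snd_pos (i : n) : 0 < c i := by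
  simpa using hQ.fromBlocks_diagonal_quadratic_pos i (x := 0) (y := 1) (by simp)

theorem PosDef.fromBlocks_diagonal_det_pos (i : n) : 0 < a i * c i - b i * b i := by
  have ha := hQ.fromBlocks_diagonal_fst_pos i
  -- the form at `(b i, -a i)` equals `a i * (a i * c i - b i * b i)`
  have h := hQ.fromBlocks_diagonal_quadratic_pos i (x := b i) (y := -a i)
    (Or.inr (neg_ne_zero.mpr ha.ne'))
  refine pos_of_mul_pos_right (a := a i) ?_ ha.le
  linarith

end Matrix

theorem stmt_0_general {N : ℕ}
    (Q₁₁ Q₁₂ Q₂₂ L₁ L₂ : Matrix (Fin N) (Fin N) ℝ)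
    (hQ₁₁d : Q₁₁.IsDiag) (hQ₁₂d : Q₁₂.IsDiag) (hQ₂₂d : Q₂₂.IsDiag)
    (hL₁d : L₁.IsDiag) (hL₂d : L₂.IsDiag)
    (hQ : (Matrix.fromBlocks Q₁₁ Q₁₂ Q₁₂ Q₂₂).PosDef)
    (hQ₁₂ : (-Q₁₂).PosDef) (hL₁ : L₁.PosDef) (hL₂ : L₂.PosDef)
    (P₁₁ P₁₂ P₂₂ K₁ K₂ : Matrix (Fin N) (Fin N) ℝ)
    (hP₁₁ : P₁₁ = (Matrix.fromBlocks Q₁₁ Q₁₂ Q₁₂ Q₂₂)⁻¹.toBlocks₁₁)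
    (hP₁₂ : P₁₂ = (Matrix.fromBlocks Q₁₁ Q₁₂ Q₁₂ Q₂₂)⁻¹.toBlocks₁₂)
    (hP₂₂ : P₂₂ = (Matrix.fromBlocks Q₁₁ Q₁₂ Q₁₂ Q₂₂)⁻¹.toBlocks₂₂)
    (hK₁ : K₁ = L₁ * P₁₁ + L₂ * P₁₂ᵀ)
    (hK₂ : K₂ = L₁ * P₁₂ + L₂ * P₂₂) :
    K₁.IsDiag ∧ K₁.PosDef ∧ K₂.IsDiag ∧ K₂.PosDef := by
  obtain ⟨a, rfl⟩ : ∃ a, Q₁₁ = diagonal a := ⟨_, hQ₁₁d.diagonal_diag.symm⟩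
  obtain ⟨b, rfl⟩ : ∃ b, Q₁₂ = diagonal b := ⟨_, hQ₁₂d.diagonal_diag.symm⟩
  obtain ⟨c, rfl⟩ : ∃ c, Q₂₂ = diagonal c := ⟨_, hQ₂₂d.diagonal_diag.symm⟩
  obtain ⟨l₁, rfl⟩ : ∃ l, L₁ = diagonal l := ⟨_, hL₁d.diagonal_diag.symm⟩
  obtain ⟨l₂, rfl⟩ : ∃ l, L₂ = diagonal l := ⟨_, hL₂d.diagonal_diag.symm⟩
  rw [diagonal_neg, posDef_diagonal_iff] at hQ₁₂
  rw [posDef_diagonal_iff] at hL₁ hL₂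
  have hd i := hQ.fromBlocks_diagonal_det_pos i
  rw [inv_fromBlocks_diagonal a b b c fun i => (hd i).ne'] at hP₁₁ hP₁₂ hP₂₂
  simp only [toBlocks_fromBlocks₁₁, toBlocks_fromBlocks₁₂, toBlocks_fromBlocks₂₂]
    at hP₁₁ hP₁₂ hP₂₂
  subst hP₁₁ hP₁₂ hP₂₂ hK₁ hK₂
  simp only [diagonal_transpose, diagonal_mul_diagonal, diagonal_add]
  refine ⟨isDiag_diagonal _, .diagonal fun i => ?_, isDiag_diagonal _, .diagonal fun i => ?_⟩
  · exact add_pos (mul_pos (hL₁ i) (div_pos (hQ.fromBlocks_diagonal_snd_pos i) (hd i)))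
      (mul_pos (hL₂ i) (div_pos (hQ₁₂ i) (hd i)))
  · exact add_pos (mul_pos (hL₁ i) (div_pos (hQ₁₂ i) (hd i)))
      (mul_pos (hL₂ i) (div_pos (hQ.fromBlocks_diagonal_fst_pos i) (hd i)))

/-- Lemma 1 of the paper: the feedback gains `K₁, K₂` obtained from a solution of the
sparse LMI are diagonal positive definite matrices. -/
theorem stmt_0 {N : ℕ} (hN : 1 ≤ N)
    (Q₁₁ Q₁₂ Q₂₂ L₁ L₂ : Matrix (Fin N) (Fin N) ℝ)
    (hQ₁₁d : Q₁₁.IsDiag) (hQ₁₂d : Q₁₂.IsDiag) (hQ₂₂d : Q₂₂.IsDiag)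
    (hL₁d : L₁.IsDiag) (hL₂d : L₂.IsDiag)
    (hQ : (Matrix.fromBlocks Q₁₁ Q₁₂ Q₁₂ Q₂₂).PosDef)
    (hQ₁₂ : (-Q₁₂).PosDef) (hL₁ : L₁.PosDef) (hL₂ : L₂.PosDef)
    (P₁₁ P₁₂ P₂₂ K₁ K₂ : Matrix (Fin N) (Fin N) ℝ)
    (hP₁₁ : P₁₁ = (Matrix.fromBlocks Q₁₁ Q₁₂ Q₁₂ Q₂₂)⁻¹.toBlocks₁₁)
    (hP₁₂ : P₁₂ = (Matrix.fromBlocks Q₁₁ Q₁₂ Q₁₂ Q₂₂)⁻¹.toBlocks₁₂)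
    (hP₂₂ : P₂₂ = (Matrix.fromBlocks Q₁₁ Q₁₂ Q₁₂ Q₂₂)⁻¹.toBlocks₂₂)
    (hK₁ : K₁ = L₁ * P₁₁ + L₂ * P₁₂ᵀ)
    (hK₂ : K₂ = L₁ * P₁₂ + L₂ * P₂₂) :
    K₁.IsDiag ∧ K₁.PosDef ∧ K₂.IsDiag ∧ K₂.PosDef :=
  stmt_0_general Q₁₁ Q₁₂ Q₂₂ L₁ L₂ hQ₁₁d hQ₁₂d hQ₂₂d hL₁d hL₂d hQ hQ₁₂ hL₁ hL₂ P₁₁ P₁₂ P₂₂ K₁ K₂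
    hP₁₁ hP₁₂ hP₂₂ hK₁ hK₂
end

section
/- Let P be a symmetric positive semidefinite n×n real matrix, A_cl an n×n real matrix, B₂ an n×m real matrix, C a p×n real matrix, and γ > 0, and suppose the symmetric matrix (A_cl)ᵀP + P·A_cl + γ⁻¹CᵀC + γ⁻¹P·B₂B₂ᵀ·P is negative semidefinite. Let x : ℝ → ℝⁿ be differentiable and d : ℝ → ℝᵐ be such that x′(t) = A_cl·x(t) + B₂·d(t) for all t. Then the function V(t) = x(t)ᵀP·x(t) is differentiable and satisfies V′(t) ≤ −γ⁻¹‖C·x(t)‖² + γ‖d(t)‖² for all t, where ‖·‖ is the Euclidean norm. -/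
/-!
By the product rule and the symmetry of `P`, along `x' = A_cl x + B₂ d` one gets
`V' = xᵀ(A_clᵀP + PA_cl)x + 2⟨d, B₂ᵀPx⟩`. Young's inequality bounds the cross term by
`γ‖d‖² + γ⁻¹‖B₂ᵀPx‖²`, and `PB₂B₂ᵀP = (B₂ᵀP)ᵀ(B₂ᵀP)`, so what remains apart from `γ‖d‖²` is the
quadratic form of the LMI matrix minus `γ⁻¹‖Cx‖²`; the LMI makes that form nonpositive.
-/

open Matrix

section Calculus

variable {ι κ : Type*} [Fintype ι] [Fintype κ] {t : ℝ}

theorem HasDerivAt.dotProduct {x y : ℝ → ι → ℝ} {x' y' : ι → ℝ}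
    (hx : HasDerivAt x x' t) (hy : HasDerivAt y y' t) :
    HasDerivAt (fun s => x s ⬝ᵥ y s) (x' ⬝ᵥ y t + x t ⬝ᵥ y') t := by
  simp only [_root_.dotProduct, ← Finset.sum_add_distrib]
  exact HasDerivAt.fun_sum fun i _ => (hasDerivAt_pi.mp hx i).mul (hasDerivAt_pi.mp hy i)

theorem HasDerivAt.mulVec (M : Matrix κ ι ℝ) {x : ℝ → ι → ℝ} {x' : ι → ℝ}
    (hx : HasDerivAt x x' t) : HasDerivAt (fun s => M *ᵥ x s) (M *ᵥ x') t :=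
  (Matrix.mulVecLin M).toContinuousLinearMap.hasFDerivAt.comp_hasDerivAt t hx

end Calculus

section Algebra

variable {R ι κ : Type*} [CommRing R] [Fintype ι] [Fintype κ]

theorem Matrix.polar_dotProduct_mulVec_affine {P A : Matrix ι ι R} (hP : Pᵀ = P) (B : Matrix ι κ R)
    (v : ι → R) (w : κ → R) :
    (A *ᵥ v + B *ᵥ w) ⬝ᵥ P *ᵥ v + v ⬝ᵥ P *ᵥ (A *ᵥ v + B *ᵥ w)
      = v ⬝ᵥ (Aᵀ * P + P * A) *ᵥ v + 2 * (w ⬝ᵥ (Bᵀ * P) *ᵥ v) := by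
  have hP_symm : ∀ y : ι → R, v ⬝ᵥ P *ᵥ y = y ⬝ᵥ P *ᵥ v := fun y => by
    rw [dotProduct_comm, dotProduct_mulVec, ← mulVec_transpose, hP]
  rw [hP_symm, add_mulVec, dotProduct_add, ← mulVec_mulVec, ← mulVec_mulVec, ← mulVec_mulVec,
    dotProduct_mulVec v Aᵀ, dotProduct_mulVec w Bᵀ, vecMul_transpose, vecMul_transpose, hP_symm,
    add_dotProduct]
  ring

theorem Matrix.dotProduct_transpose_mul_self_mulVec {m : Type*} [Fintype m]
    (C : Matrix m ι R) (v : ι → R) : v ⬝ᵥ (Cᵀ * C) *ᵥ v = C *ᵥ v ⬝ᵥ C *ᵥ v := by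
  rw [← mulVec_mulVec, dotProduct_mulVec, vecMul_transpose]

theorem Matrix.dotProduct_lmi_mulVec {P A : Matrix ι ι R} (hP : Pᵀ = P) {m : Type*} [Fintype m]
    (B : Matrix ι κ R) (C : Matrix m ι R) (c : R) (v : ι → R) :
    v ⬝ᵥ (Aᵀ * P + P * A + c • (Cᵀ * C) + c • (P * B * Bᵀ * P)) *ᵥ v
      = v ⬝ᵥ (Aᵀ * P + P * A) *ᵥ v + c * (C *ᵥ v ⬝ᵥ C *ᵥ v)
        + c * ((Bᵀ * P) *ᵥ v ⬝ᵥ (Bᵀ * P) *ᵥ v) := by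
  have hPBBP : P * B * Bᵀ * P = (Bᵀ * P)ᵀ * (Bᵀ * P) := by
    rw [transpose_mul, transpose_transpose, hP, Matrix.mul_assoc (P * B)]
  rw [hPBBP, add_mulVec, add_mulVec, dotProduct_add, dotProduct_add, smul_mulVec, smul_mulVec,
    dotProduct_smul, dotProduct_smul, dotProduct_transpose_mul_self_mulVec,
    dotProduct_transpose_mul_self_mulVec, smul_eq_mul, smul_eq_mul]

end Algebra

theorem Matrix.dotProduct_mulVec_nonpos_of_posSemidef_neg {ι : Type*} [Fintype ι]
    {M : Matrix ι ι ℝ} (hM : (-M).PosSemidef) (v : ι → ℝ) : v ⬝ᵥ M *ᵥ v ≤ 0 := by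
  have := hM.dotProduct_mulVec_nonneg v
  rwa [star_trivial, neg_mulVec, dotProduct_neg, neg_nonneg] at this

theorem two_mul_dotProduct_le {ι : Type*} [Fintype ι] {γ : ℝ} (hγ : 0 < γ) (w u : ι → ℝ) :
    2 * (w ⬝ᵥ u) ≤ γ * (w ⬝ᵥ w) + γ⁻¹ * (u ⬝ᵥ u) := by
  have hsq := Finset.sum_nonneg fun i (_ : i ∈ Finset.univ) => sq_nonneg (γ * w i - u i)
  have hexpand : γ * (γ * (w ⬝ᵥ w) + γ⁻¹ * (u ⬝ᵥ u) - 2 * (w ⬝ᵥ u))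
      = ∑ i, (γ * w i - u i) ^ 2 := by
    simp only [dotProduct, Finset.mul_sum, ← Finset.sum_sub_distrib, ← Finset.sum_add_distrib]
    refine Finset.sum_congr rfl fun i _ => ?_
    field_simp
    ring
  nlinarith

/-- Pointwise dissipation inequality for the quadratic storage function
`V(t) = x(t)ᵀ P x(t)` along trajectories of `x' = A_cl x + B₂ d`:
`V'(t) ≤ −γ⁻¹‖C x(t)‖² + γ‖d(t)‖²` (Euclidean norms, written via sums of squares). -/
theorem stmt_7 {n m p : ℕ}
    (P : Matrix (Fin n) (Fin n) ℝ) (hP : P.PosSemidef)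
    (Acl : Matrix (Fin n) (Fin n) ℝ)
    (B₂ : Matrix (Fin n) (Fin m) ℝ) (C : Matrix (Fin p) (Fin n) ℝ)
    (γ : ℝ) (hγ : 0 < γ)
    (hLMI : (-(Aclᵀ * P + P * Acl + γ⁻¹ • (Cᵀ * C)
        + γ⁻¹ • (P * B₂ * B₂ᵀ * P))).PosSemidef)
    (x : ℝ → (Fin n → ℝ)) (d : ℝ → (Fin m → ℝ))
    (hx : Differentiable ℝ x)
    (hdyn : ∀ t, deriv x t = Acl.mulVec (x t) + B₂.mulVec (d t))
    (V : ℝ → ℝ) (hV : V = fun t => x t ⬝ᵥ P.mulVec (x t)) :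
    Differentiable ℝ V ∧
    ∀ t, deriv V t ≤ -γ⁻¹ * (∑ i, (C.mulVec (x t)) i ^ 2)
        + γ * (∑ i, (d t) i ^ 2) := by
  have hPsymm : Pᵀ = P := hP.1
  have hV' : ∀ t, HasDerivAt V (deriv x t ⬝ᵥ P *ᵥ x t + x t ⬝ᵥ P *ᵥ deriv x t) t := fun t =>
    hV ▸ (hx t).hasDerivAt.dotProduct ((hx t).hasDerivAt.mulVec P)
  refine ⟨fun t => (hV' t).differentiableAt, fun t => ?_⟩
  have hsum_sq : ∀ {k : ℕ} (v : Fin k → ℝ), ∑ i, v i ^ 2 = v ⬝ᵥ v := fun v => by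
    simp only [dotProduct, sq]
  have hLMI_x := dotProduct_mulVec_nonpos_of_posSemidef_neg hLMI (x t)
  rw [dotProduct_lmi_mulVec hPsymm] at hLMI_x
  have hYoung := two_mul_dotProduct_le hγ (d t) ((B₂ᵀ * P) *ᵥ x t)
  rw [(hV' t).deriv, hdyn t, polar_dotProduct_mulVec_affine hPsymm, hsum_sq, hsum_sq]
  linarith
end
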